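/- Let H_A and H_B be finite-dimensional complex inner product spaces, Y ⊆ H_A ⊗ H_B a subspace, and ε > 0. Let ρ_A = tr_B(P_Y) and let P_+ = 1_{[ε,∞)}(ρ_A) be the spectral projection of ρ_A onto eigenvalues in [ε,∞). Then rank(P_+) ≤ (dim Y)/ε. Consequently the trimmed subspace trim_ε^A(Y) := (P_+ ⊗ id_B)(Y) is contained in V ⊗ H_B for a subspace V ⊆ H_A with dim V ≤ (dim Y)/ε. -/

import Mathlib

noncomputable section

/-- Concrete model of the Hilbert tensor product: the tensor `a ⊗ b`. -/
def tmul {ι κ : Type*} [Fintype ι] [Fintype κ]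
    (a : EuclideanSpace ℂ ι) (b : EuclideanSpace ℂ κ) : EuclideanSpace ℂ (ι × κ) :=
  WithLp.toLp 2 (fun p => a p.1 * b p.2)

/-- The subspace `V ⊗ H₂`: the span of the simple tensors `v ⊗ b` with `v ∈ V`. -/
def extSub {ι κ : Type*} [Fintype ι] [Fintype κ]
    (V : Submodule ℂ (EuclideanSpace ℂ ι)) : Submodule ℂ (EuclideanSpace ℂ (ι × κ)) :=
  Submodule.span ℂ {x | ∃ v ∈ V, ∃ b : EuclideanSpace ℂ κ, x = tmul v b}

/-- The operator `X ⊗ Y` on the concrete tensor product. -/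
def kron {ι κ : Type*} [Fintype ι] [Fintype κ] [DecidableEq ι] [DecidableEq κ]
    (X : EuclideanSpace ℂ ι →ₗ[ℂ] EuclideanSpace ℂ ι)
    (Y : EuclideanSpace ℂ κ →ₗ[ℂ] EuclideanSpace ℂ κ) :
    EuclideanSpace ℂ (ι × κ) →ₗ[ℂ] EuclideanSpace ℂ (ι × κ) :=
  Matrix.toEuclideanLin
    (Matrix.kroneckerMap (· * ·) (Matrix.toEuclideanLin.symm X) (Matrix.toEuclideanLin.symm Y))

/-- The orthogonal projection onto a subspace, as an operator on the ambient space. -/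
def projOf {E : Type*} [NormedAddCommGroup E] [InnerProductSpace ℂ E] [FiniteDimensional ℂ E]
    (S : Submodule ℂ E) : E →L[ℂ] E :=
  S.subtypeL.comp (S.orthogonalProjection)

/-- The span of the eigenvectors of `ρ` whose eigenvalue is a real number in the set `I`. -/
def specSub {E : Type*} [NormedAddCommGroup E] [InnerProductSpace ℂ E] [FiniteDimensional ℂ E]
    (ρ : E →ₗ[ℂ] E) (I : Set ℝ) : Submodule ℂ E :=
  ⨆ c : I, Module.End.eigenspace ρ ((c : ℝ) : ℂ)

/-! Let `V` be the span of the eigenvectors of `ρ_A` with eigenvalue `≥ ε`. It is `ρ_A`-invariant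
and has a basis of such eigenvectors, so `ε · dim V ≤ Re tr(ρ_A P_V)`. By the defining property of
the partial trace this equals `Re tr(P_Y (P_V ⊗ 1))`; as `P_V ⊗ 1` is an orthogonal projection,
hence a contraction, evaluating this trace in an orthonormal basis of `Y` bounds it by `dim Y`.
The range of `P_V ⊗ 1` lies in `V ⊗ H_B`, so `V` itself is the required subspace. -/

open Module LinearMap

theorem trace_eq_sum_of_basis_eigenvectors {R M ι : Type*} [CommRing R] [AddCommGroup M]
    [Module R M] [Fintype ι] [DecidableEq ι] (b : Basis ι R M) (f : M →ₗ[R] M) (μ : ι → R)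
    (hf : ∀ i, f (b i) = μ i • b i) :
    trace R M f = ∑ i, μ i := by
  rw [trace_eq_matrix_trace R b, Matrix.trace]
  refine Fintype.sum_congr _ _ fun i => ?_
  simp [LinearMap.toMatrix_apply, hf]

section InnerProductSpace

variable {E : Type*} [NormedAddCommGroup E] [InnerProductSpace ℂ E]

theorem LinearMap.IsSymmetricProjection.norm_apply_le {T : E →ₗ[ℂ] E}
    (hT : T.IsSymmetricProjection) (v : E) : ‖T v‖ ≤ ‖v‖ := by
  obtain ⟨_, hT⟩ := T.isSymmetricProjection_iff_eq_coe_starProjection_range.mp hT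
  rw [hT]
  exact (range T).norm_starProjection_apply_le v

theorem LinearMap.IsSymmetricProjection.id : (LinearMap.id : E →ₗ[ℂ] E).IsSymmetricProjection :=
  ⟨IsIdempotentElem.one, IsSymmetric.id⟩

variable [FiniteDimensional ℂ E]

theorem projOf_apply_mem (S : Submodule ℂ E) (x : E) : projOf S x ∈ S :=
  S.starProjection_apply_mem x

theorem isSymmetricProjection_projOf (S : Submodule ℂ E) :
    (projOf S).toLinearMap.IsSymmetricProjection :=
  S.isSymmetricProjection_starProjection

theorem trace_comp_projOf_eq_trace_restrict (g : E →ₗ[ℂ] E) (S : Submodule ℂ E)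
    (hg : Set.MapsTo g S S) :
    trace ℂ E (g ∘ₗ (projOf S).toLinearMap) = trace ℂ S (g.restrict hg) := by
  have hfix : (S.orthogonalProjectionOnto : E →ₗ[ℂ] S) ∘ₗ g ∘ₗ S.subtype = g.restrict hg := by
    ext x
    exact congrArg Subtype.val (S.orthogonalProjectionOnto_mem_subspace_eq_self ⟨g x, hg x.2⟩)
  rw [← hfix, ← trace_comp_comm' (S.orthogonalProjectionOnto : E →ₗ[ℂ] S) (g ∘ₗ S.subtype)]
  rfl

theorem re_trace_projOf_comp_le (Y : Submodule ℂ E) (T : E →ₗ[ℂ] E)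
    (hT : ∀ v, ‖T v‖ ≤ ‖v‖) :
    (trace ℂ E ((projOf Y).toLinearMap ∘ₗ T)).re ≤ finrank ℂ Y := by
  let b := stdOrthonormalBasis ℂ Y
  have hsplit : (projOf Y).toLinearMap ∘ₗ T
      = Y.subtype ∘ₗ ((Y.orthogonalProjectionOnto : E →ₗ[ℂ] Y) ∘ₗ T) := rfl
  rw [hsplit, trace_comp_comm', trace_eq_sum_inner _ b, Complex.re_sum]
  calc ∑ i, (inner ℂ (b i) ((Y.orthogonalProjectionOnto : E →ₗ[ℂ] Y) (T (b i)))).re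
      = ∑ i, (inner ℂ (b i : E) (T (b i))).re := by simp
    _ ≤ ∑ _i, (1 : ℝ) := Finset.sum_le_sum fun i _ => by
        calc (inner ℂ (b i : E) (T (b i))).re ≤ ‖(b i : E)‖ * ‖T (b i)‖ :=
              (Complex.re_le_norm _).trans (norm_inner_le_norm _ _)
          _ ≤ 1 := by
              have hbi : ‖(b i : E)‖ = 1 := b.orthonormal.1 i
              nlinarith [hT (b i), norm_nonneg (T (b i))]
    _ = finrank ℂ Y := by simp

theorem specSub_eq_span (g : E →ₗ[ℂ] E) (I : Set ℝ) :
    specSub g I = Submodule.span ℂ {x | ∃ c ∈ I, g x = (c : ℂ) • x} := by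
  apply le_antisymm
  · refine iSup_le fun c x hx => Submodule.subset_span ⟨c, c.2, ?_⟩
    exact Module.End.mem_eigenspace_iff.1 hx
  · refine Submodule.span_le.2 fun x ⟨c, hc, hx⟩ => ?_
    exact le_iSup (fun c : I => Module.End.eigenspace g ((c : ℝ) : ℂ)) ⟨c, hc⟩
      (Module.End.mem_eigenspace_iff.2 hx)

theorem mapsTo_specSub (g : E →ₗ[ℂ] E) (I : Set ℝ) :
    Set.MapsTo g (specSub g I) (specSub g I) := by
  rw [specSub_eq_span]
  refine fun x hx => (?_ : Submodule.span ℂ _ ≤ (Submodule.span ℂ _).comap g) hx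
  refine Submodule.span_le.2 fun y ⟨c, hc, hy⟩ => ?_
  simp only [SetLike.mem_coe, Submodule.mem_comap, hy]
  exact Submodule.smul_mem _ _ (Submodule.subset_span ⟨c, hc, hy⟩)

theorem exists_basis_specSub (g : E →ₗ[ℂ] E) (I : Set ℝ) :
    ∃ (s : Set E) (b : Basis s ℂ (specSub g I)) (μ : s → ℝ),
      ∀ i, μ i ∈ I ∧ g (b i) = (μ i : ℂ) • (b i : E) := by
  obtain ⟨s, hs, hspan, hli⟩ := exists_linearIndependent ℂ {x | ∃ c ∈ I, g x = (c : ℂ) • x}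
  have hsV : Submodule.span ℂ (Set.range ((↑) : s → E)) = specSub g I := by
    rw [Subtype.range_coe, hspan, specSub_eq_span]
  choose μ hμ using fun i : s => hs i.2
  exact ⟨s, (Basis.span hli).map (LinearEquiv.ofEq _ _ hsV), μ, fun i => by simpa using hμ i⟩

theorem mul_finrank_specSub_le_re_trace (g : E →ₗ[ℂ] E) (ε : ℝ) :
    ε * finrank ℂ (specSub g (Set.Ici ε)) ≤
      (trace ℂ E (g ∘ₗ (projOf (specSub g (Set.Ici ε))).toLinearMap)).re := by
  classical
  obtain ⟨s, b, μ, hμ⟩ := exists_basis_specSub g (Set.Ici ε)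
  have : Fintype s := @Fintype.ofFinite s (Module.Finite.finite_basis b)
  rw [trace_comp_projOf_eq_trace_restrict g _ (mapsTo_specSub g _),
    trace_eq_sum_of_basis_eigenvectors b _ (fun i => (μ i : ℂ))
      (fun i => Subtype.ext (hμ i).2),
    finrank_eq_card_basis b, Complex.re_sum]
  simp only [Complex.ofReal_re]
  calc ε * Fintype.card s = ∑ _i : s, ε := by
        rw [Finset.sum_const, Finset.card_univ, nsmul_eq_mul, mul_comm]
    _ ≤ ∑ i, μ i := Finset.sum_le_sum fun i _ => (hμ i).1

end InnerProductSpace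

section Kronecker

open scoped Kronecker Matrix

variable {ι κ : Type*} [Fintype ι] [Fintype κ] [DecidableEq ι] [DecidableEq κ]

theorem kron_comp (X X' : EuclideanSpace ℂ ι →ₗ[ℂ] EuclideanSpace ℂ ι)
    (Y Y' : EuclideanSpace ℂ κ →ₗ[ℂ] EuclideanSpace ℂ κ) :
    kron X Y ∘ₗ kron X' Y' = kron (X ∘ₗ X') (Y ∘ₗ Y') := by
  simp only [kron, Matrix.toLpLin_symm_comp (q := 2), ← Matrix.toLpLin_mul_same]
  rw [← Matrix.mul_kronecker_mul]

theorem symm_toEuclideanLin_adjoint (A : EuclideanSpace ℂ ι →ₗ[ℂ] EuclideanSpace ℂ ι) :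
    Matrix.toEuclideanLin.symm (adjoint A) = (Matrix.toEuclideanLin.symm A)ᴴ := by
  rw [LinearEquiv.symm_apply_eq, Matrix.toEuclideanLin_conjTranspose_eq_adjoint,
    LinearEquiv.apply_symm_apply]

theorem adjoint_kron (X : EuclideanSpace ℂ ι →ₗ[ℂ] EuclideanSpace ℂ ι)
    (Y : EuclideanSpace ℂ κ →ₗ[ℂ] EuclideanSpace ℂ κ) :
    adjoint (kron X Y) = kron (adjoint X) (adjoint Y) := by
  rw [kron, kron, symm_toEuclideanLin_adjoint, symm_toEuclideanLin_adjoint,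
    ← Matrix.toEuclideanLin_conjTranspose_eq_adjoint]
  exact congrArg _ (Matrix.conjTranspose_kronecker _ _)

theorem LinearMap.IsSymmetricProjection.kron
    {X : EuclideanSpace ℂ ι →ₗ[ℂ] EuclideanSpace ℂ ι}
    {Y : EuclideanSpace ℂ κ →ₗ[ℂ] EuclideanSpace ℂ κ}
    (hX : X.IsSymmetricProjection) (hY : Y.IsSymmetricProjection) :
    (kron X Y).IsSymmetricProjection where
  isIdempotentElem := by
    rw [IsIdempotentElem, Module.End.mul_eq_comp, kron_comp, ← Module.End.mul_eq_comp,
      ← Module.End.mul_eq_comp, hX.isIdempotentElem.eq, hY.isIdempotentElem.eq]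
  isSymmetric := by
    rw [isSymmetric_iff_isSelfAdjoint, isSelfAdjoint_iff', adjoint_kron,
      isSelfAdjoint_iff'.1 ((isSymmetric_iff_isSelfAdjoint X).1 hX.isSymmetric),
      isSelfAdjoint_iff'.1 ((isSymmetric_iff_isSelfAdjoint Y).1 hY.isSymmetric)]

theorem kron_tmul (X : EuclideanSpace ℂ ι →ₗ[ℂ] EuclideanSpace ℂ ι)
    (Y : EuclideanSpace ℂ κ →ₗ[ℂ] EuclideanSpace ℂ κ)
    (a : EuclideanSpace ℂ ι) (b : EuclideanSpace ℂ κ) :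
    kron X Y (tmul a b) = tmul (X a) (Y b) := by
  conv_rhs => rw [← Matrix.toEuclideanLin.apply_symm_apply X,
    ← Matrix.toEuclideanLin.apply_symm_apply Y]
  ext p
  simp only [kron, tmul, Matrix.ofLp_toLpLin, Matrix.toLin'_apply, Matrix.mulVec, dotProduct,
    Matrix.kroneckerMap_apply, Fintype.sum_prod_type, Finset.sum_mul_sum]
  exact Finset.sum_congr rfl fun k _ => Finset.sum_congr rfl fun l _ => by ring

theorem tmul_single (p : ι × κ) :
    tmul (EuclideanSpace.single p.1 (1 : ℂ)) (EuclideanSpace.single p.2 (1 : ℂ)) =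
      EuclideanSpace.single p 1 := by
  ext q
  simp only [tmul, PiLp.single_apply, Prod.ext_iff]
  split_ifs <;> simp_all

theorem kron_apply_mem_extSub {X : EuclideanSpace ℂ ι →ₗ[ℂ] EuclideanSpace ℂ ι}
    {V : Submodule ℂ (EuclideanSpace ℂ ι)} (hX : ∀ x, X x ∈ V)
    (Y : EuclideanSpace ℂ κ →ₗ[ℂ] EuclideanSpace ℂ κ) (x : EuclideanSpace ℂ (ι × κ)) :
    kron X Y x ∈ extSub (κ := κ) V := by
  rw [← (EuclideanSpace.basisFun (ι × κ) ℂ).sum_repr x, map_sum]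
  refine Submodule.sum_mem _ fun p _ => ?_
  rw [map_smul, EuclideanSpace.basisFun_apply, ← tmul_single, kron_tmul]
  exact Submodule.smul_mem _ _ (Submodule.subset_span ⟨_, hX _, _, rfl⟩)

end Kronecker

/-- Rank bound for trimming: if `ρ_A = tr_B(P_Y)` and `P₊ = 1_{[ε,∞)}(ρ_A)`, then
`rank P₊ ≤ dim Y / ε`, and consequently the trimmed subspace `(P₊ ⊗ id_B)(Y)` is contained
in `V ⊗ H_B` for a subspace `V ⊆ H_A` with `dim V ≤ dim Y / ε`. -/
theorem trimmed_rank_bound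
    {ιA ιB : Type*} [Fintype ιA] [Fintype ιB] [DecidableEq ιA] [DecidableEq ιB]
    (Y : Submodule ℂ (EuclideanSpace ℂ (ιA × ιB)))
    (ρA : EuclideanSpace ℂ ιA →ₗ[ℂ] EuclideanSpace ℂ ιA)
    (hρ : ∀ X : EuclideanSpace ℂ ιA →ₗ[ℂ] EuclideanSpace ℂ ιA,
      LinearMap.trace ℂ _ (ρA ∘ₗ X) =
        LinearMap.trace ℂ _ ((projOf Y).toLinearMap ∘ₗ kron X LinearMap.id))
    (ε : ℝ) (hε : 0 < ε) :
    (Module.finrank ℂ (specSub ρA (Set.Ici ε)) : ℝ) ≤ (Module.finrank ℂ Y : ℝ) / ε ∧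
    ∃ V : Submodule ℂ (EuclideanSpace ℂ ιA),
      (Module.finrank ℂ V : ℝ) ≤ (Module.finrank ℂ Y : ℝ) / ε ∧
      Y.map (kron (projOf (specSub ρA (Set.Ici ε))).toLinearMap LinearMap.id) ≤
        extSub (κ := ιB) V := by
  set V := specSub ρA (Set.Ici ε)
  have hQ : (kron (κ := ιB) (projOf V).toLinearMap LinearMap.id).IsSymmetricProjection :=
    (isSymmetricProjection_projOf V).kron .id
  have hdim : (finrank ℂ V : ℝ) ≤ finrank ℂ Y / ε := by
    rw [le_div_iff₀' hε]
    calc ε * (finrank ℂ V : ℝ)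
        ≤ (trace ℂ _ (ρA ∘ₗ (projOf V).toLinearMap)).re := mul_finrank_specSub_le_re_trace ρA ε
      _ = (trace ℂ _ ((projOf Y).toLinearMap ∘ₗ kron (projOf V).toLinearMap id)).re := by
          rw [hρ]
      _ ≤ finrank ℂ Y := re_trace_projOf_comp_le Y _ hQ.norm_apply_le
  refine ⟨hdim, V, hdim, ?_⟩
  rintro _ ⟨y, -, rfl⟩
  exact kron_apply_mem_extSub (projOf_apply_mem V) _ y
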